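/- Let d ≥ 1, g ≥ 0, and let (v, p) be a smooth solution of the incompressible Euler equations with gravity g on an open set U ⊆ ℝ_t × ℝᵈ_x. Then on U one has the identity: 2 D_t( Σ_{i,j,k} ∂_j v_k ∂_k v_i ∂_i v_j ) = −6 Σ_j ∂_j( Σ_{i,k} ∂_k p ∂_k v_i ∂_i v_j ) + 3 Σ_k ∂_k( ∂_k p Σ_{i,j} ∂_j v_i ∂_i v_j ) + 3 (Δp)² − 6 Σ_{i,j,k,l} ∂_j v_l ∂_l v_k ∂_k v_i ∂_i v_j. -/

import Mathlib

noncomputable section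

/-- Time-space: `ℝ_t × ℝᵈ_x`. -/
abbrev Spc (d : ℕ) := ℝ × (Fin d → ℝ)

/-- The spatial partial derivative `∂ᵢ F`. -/
def pd {d : ℕ} (i : Fin d) (F : Spc d → ℝ) (z : Spc d) : ℝ :=
  fderiv ℝ F z (0, Pi.single i 1)

/-- The material derivative `D_t F = ∂_t F + v·∇F` associated with the velocity field `v`. -/
def mdt {d : ℕ} (v : Spc d → Fin d → ℝ) (F : Spc d → ℝ) (z : Spc d) : ℝ :=
  fderiv ℝ F z (1, 0) + ∑ i : Fin d, v z i * pd i F z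

/-- The spatial Laplacian `Δ F = Σᵢ ∂ᵢ∂ᵢ F`. -/
def lap {d : ℕ} (F : Spc d → ℝ) (z : Spc d) : ℝ := ∑ i : Fin d, pd i (pd i F) z

/-- `(v, p)` solves the incompressible Euler equations with gravity `g` on `U`:
`∂_t v + (v·∇)v = −∇p − g e_d` and `∇·v = 0` on `U`, `e_d` the last standard basis vector. -/
def IsEulerOn {d : ℕ} (g : ℝ) (U : Set (Spc d)) (v : Spc d → Fin d → ℝ) (p : Spc d → ℝ) :
    Prop :=
  (∀ z ∈ U, ∀ j : Fin d,
      mdt v (fun w => v w j) z = -pd j p z - (if (j : ℕ) = d - 1 then g else 0)) ∧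
    (∀ z ∈ U, ∑ i : Fin d, pd i (fun w => v w i) z = 0)

namespace S11
open Filter Topology ContDiff

variable {d : ℕ} {U : Set (Spc d)} {F G : Spc d → ℝ} {z : Spc d} {u w : Spc d}

/-- generic directional derivative -/
def dd (u : Spc d) (F : Spc d → ℝ) (z : Spc d) : ℝ := fderiv ℝ F z u

lemma pd_eq_dd (i : Fin d) (F : Spc d → ℝ) : pd i F = dd (0, Pi.single i 1) F := rfl

lemma mdt_eq (v : Spc d → Fin d → ℝ) (F : Spc d → ℝ) (z : Spc d) :
    mdt v F z = dd (1, 0) F z + ∑ i : Fin d, v z i * dd (0, Pi.single i 1) F z := rfl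

lemma dd_smoothOn (hU : IsOpen U) (hF : ContDiffOn ℝ (⊤ : ℕ∞) F U) :
    ContDiffOn ℝ (⊤ : ℕ∞) (dd u F) U := by
  have h : ContDiffOn ℝ ∞ (fderiv ℝ F) U :=
    ((contDiffOn_infty_iff_fderiv_of_isOpen hU).1 hF).2
  exact h.clm_apply contDiffOn_const

lemma diffAt (hU : IsOpen U) (hF : ContDiffOn ℝ (⊤ : ℕ∞) F U) (hz : z ∈ U) :
    DifferentiableAt ℝ F z :=
  (hF.contDiffAt (hU.mem_nhds hz)).differentiableAt (by simp)

lemma dd_congr (h : F =ᶠ[nhds z] G) : dd u F z = dd u G z := by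
  unfold dd; rw [h.fderiv_eq]

lemma dd_congrOn (hU : IsOpen U) (hz : z ∈ U) (h : ∀ y ∈ U, F y = G y) :
    dd u F z = dd u G z :=
  dd_congr (by filter_upwards [hU.mem_nhds hz] with y hy using h y hy)

lemma dd_add (hF : DifferentiableAt ℝ F z) (hG : DifferentiableAt ℝ G z) :
    dd u (fun y => F y + G y) z = dd u F z + dd u G z := by
  unfold dd; rw [fderiv_fun_add hF hG]; rfl

lemma dd_neg : dd u (fun y => -F y) z = -dd u F z := by
  unfold dd; rw [fderiv_fun_neg]; rfl

lemma dd_sub (hF : DifferentiableAt ℝ F z) (hG : DifferentiableAt ℝ G z) :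
    dd u (fun y => F y - G y) z = dd u F z - dd u G z := by
  unfold dd; rw [fderiv_fun_sub hF hG]; rfl

lemma dd_const (c : ℝ) : dd u (fun _ => c) z = 0 := by
  unfold dd; rw [fderiv_fun_const]; rfl

lemma dd_mul (hF : DifferentiableAt ℝ F z) (hG : DifferentiableAt ℝ G z) :
    dd u (fun y => F y * G y) z = F z * dd u G z + G z * dd u F z := by
  unfold dd; rw [fderiv_fun_mul hF hG]; rfl

lemma dd_sum {ι : Type*} (s : Finset ι) (A : ι → Spc d → ℝ)
    (h : ∀ i ∈ s, DifferentiableAt ℝ (A i) z) :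
    dd u (fun y => ∑ i ∈ s, A i y) z = ∑ i ∈ s, dd u (A i) z := by
  unfold dd; rw [fderiv_fun_sum h]; simp

lemma dd_comm (hF : ContDiffAt ℝ (⊤ : ℕ∞) F z) :
    dd u (dd w F) z = dd w (dd u F) z := by
  have h2 : DifferentiableAt ℝ (fderiv ℝ F) z := by
    have := hF.fderiv_right (m := (⊤ : ℕ∞)) (le_of_eq (show ∞ + 1 = ∞ from rfl).symm)
    exact this.differentiableAt (by simp)
  have key : ∀ a b : Spc d, dd a (dd b F) z = fderiv ℝ (fderiv ℝ F) z a b := by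
    intro a b
    have : (fun y => dd b F y) = fun y => (fderiv ℝ F y) b := rfl
    unfold dd
    rw [fderiv_clm_apply h2 (differentiableAt_const b)]
    simp
  rw [key u w, key w u]
  exact (hF.isSymmSndFDerivAt (by rw [minSmoothness_of_isRCLikeNormedField]; norm_cast)) w u |>.symm
end S11

namespace S11
open Filter Topology ContDiff

variable {d : ℕ} {U : Set (Spc d)} {F G : Spc d → ℝ} {z : Spc d}
  {v : Spc d → Fin d → ℝ}

lemma pd_is_dd (i : Fin d) (F : Spc d → ℝ) (z : Spc d) :
    pd i F z = dd (0, Pi.single i 1) F z := rfl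

lemma pd_smoothOn (hU : IsOpen U) (hF : ContDiffOn ℝ (⊤ : ℕ∞) F U) (i : Fin d) :
    ContDiffOn ℝ (⊤ : ℕ∞) (pd i F) U := dd_smoothOn hU hF

lemma pd_congrOn (hU : IsOpen U) (hz : z ∈ U) (h : ∀ y ∈ U, F y = G y) (i : Fin d) :
    pd i F z = pd i G z := dd_congrOn hU hz h

lemma pd_add (hF : DifferentiableAt ℝ F z) (hG : DifferentiableAt ℝ G z) (i : Fin d) :
    pd i (fun y => F y + G y) z = pd i F z + pd i G z := dd_add hF hG

lemma pd_neg (i : Fin d) : pd i (fun y => -F y) z = -pd i F z := dd_neg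

lemma pd_sub (hF : DifferentiableAt ℝ F z) (hG : DifferentiableAt ℝ G z) (i : Fin d) :
    pd i (fun y => F y - G y) z = pd i F z - pd i G z := dd_sub hF hG

lemma pd_const (c : ℝ) (i : Fin d) : pd i (fun _ => c) z = 0 := dd_const c

lemma pd_mul (hF : DifferentiableAt ℝ F z) (hG : DifferentiableAt ℝ G z) (i : Fin d) :
    pd i (fun y => F y * G y) z = F z * pd i G z + G z * pd i F z := dd_mul hF hG

lemma pd_sum {ι : Type*} (s : Finset ι) (A : ι → Spc d → ℝ)
    (h : ∀ i ∈ s, DifferentiableAt ℝ (A i) z) (i : Fin d) :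
    pd i (fun y => ∑ j ∈ s, A j y) z = ∑ j ∈ s, pd i (A j) z := dd_sum s A h

lemma pd_comm (hF : ContDiffAt ℝ (⊤ : ℕ∞) F z) (i j : Fin d) :
    pd i (pd j F) z = pd j (pd i F) z := dd_comm hF

lemma mdt_congrOn (hU : IsOpen U) (hz : z ∈ U) (h : ∀ y ∈ U, F y = G y) :
    mdt v F z = mdt v G z := by
  unfold mdt
  have he : F =ᶠ[nhds z] G := by filter_upwards [hU.mem_nhds hz] with y hy using h y hy
  rw [he.fderiv_eq]
  congr 1
  exact Finset.sum_congr rfl fun i _ => by rw [pd_congrOn hU hz h]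

lemma mdt_zeroOn (hU : IsOpen U) (hz : z ∈ U) (h : ∀ y ∈ U, F y = 0) :
    mdt v F z = 0 := by
  rw [mdt_congrOn hU hz (G := fun _ => (0:ℝ)) h]
  unfold mdt
  rw [fderiv_fun_const]
  simp [pd_const]

lemma mdt_mul (hF : DifferentiableAt ℝ F z) (hG : DifferentiableAt ℝ G z) :
    mdt v (fun y => F y * G y) z = F z * mdt v G z + G z * mdt v F z := by
  unfold mdt
  have h0 : fderiv ℝ (fun y => F y * G y) z (1, 0)
      = F z * fderiv ℝ G z (1, 0) + G z * fderiv ℝ F z (1, 0) := dd_mul hF hG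
  have h1 : ∑ i : Fin d, v z i * pd i (fun y => F y * G y) z
      = ∑ i : Fin d, (F z * (v z i * pd i G z) + G z * (v z i * pd i F z)) :=
    Finset.sum_congr rfl fun i _ => by rw [pd_mul hF hG i]; ring
  rw [h0, h1, Finset.sum_add_distrib, ← Finset.mul_sum, ← Finset.mul_sum]
  ring

lemma mdt_sum {ι : Type*} (s : Finset ι) (A : ι → Spc d → ℝ)
    (h : ∀ i ∈ s, DifferentiableAt ℝ (A i) z) :
    mdt v (fun y => ∑ j ∈ s, A j y) z = ∑ j ∈ s, mdt v (A j) z := by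
  unfold mdt
  have h0 : fderiv ℝ (fun y => ∑ j ∈ s, A j y) z (1, 0) = ∑ j ∈ s, fderiv ℝ (A j) z (1, 0) :=
    dd_sum s A h
  have h1 : ∑ i : Fin d, v z i * pd i (fun y => ∑ j ∈ s, A j y) z
      = ∑ j ∈ s, ∑ i : Fin d, v z i * pd i (A j) z := by
    have : ∀ i : Fin d, v z i * pd i (fun y => ∑ j ∈ s, A j y) z
        = ∑ j ∈ s, v z i * pd i (A j) z := fun i => by
      rw [pd_sum s A h i, Finset.mul_sum]
    rw [Finset.sum_congr rfl fun i _ => this i]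
    exact Finset.sum_comm
  rw [h0, h1, ← Finset.sum_add_distrib]

lemma pd_mdt (hU : IsOpen U) (hz : z ∈ U) (hv : ContDiffOn ℝ (⊤ : ℕ∞) v U)
    (hF : ContDiffOn ℝ (⊤ : ℕ∞) F U) (i : Fin d) :
    pd i (mdt v F) z
      = mdt v (pd i F) z + ∑ k : Fin d, pd i (fun w => v w k) z * pd k F z := by
  have hvk : ∀ k : Fin d, ContDiffOn ℝ (⊤ : ℕ∞) (fun w => v w k) U :=
    fun k => contDiffOn_pi.1 hv k
  have hdvk : ∀ k : Fin d, DifferentiableAt ℝ (fun w => v w k) z :=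
    fun k => diffAt hU (hvk k) hz
  have hdF : ∀ u : Spc d, DifferentiableAt ℝ (dd u F) z :=
    fun u => diffAt hU (dd_smoothOn hU hF) hz
  have hFa : ContDiffAt ℝ (⊤ : ℕ∞) F z := hF.contDiffAt (hU.mem_nhds hz)
  have e1 : pd i (mdt v F) z
      = pd i (fun y => dd (1,0) F y + ∑ k : Fin d, v y k * dd (0, Pi.single k 1) F y) z := rfl
  rw [e1, pd_add (hdF _) (by
      exact DifferentiableAt.fun_sum fun k _ => ((hdvk k).mul (hdF _))) i]
  rw [pd_sum Finset.univ (fun k y => v y k * dd (0, Pi.single k 1) F y)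
      (fun k _ => (hdvk k).mul (hdF _)) i]
  have e2 : ∀ k : Fin d, pd i (fun y => v y k * dd (0, Pi.single k 1) F y) z
      = v z k * pd i (pd k F) z + pd k F z * pd i (fun w => v w k) z := by
    intro k
    exact pd_mul (hdvk k) (hdF _) i
  have e2' : ∑ k : Fin d, pd i (fun y => v y k * dd (0, Pi.single k 1) F y) z
      = ∑ k : Fin d, (v z k * pd i (pd k F) z + pd k F z * pd i (fun w => v w k) z) :=
    Finset.sum_congr rfl fun k _ => e2 k
  rw [e2', Finset.sum_add_distrib]
  have e3 : pd i (dd (1,0) F) z = dd (1,0) (pd i F) z := by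
    rw [pd_is_dd]
    exact dd_comm hFa
  have e4 : ∀ k, pd i (pd k F) z = pd k (pd i F) z := fun k => pd_comm hFa i k
  have e5 : ∑ k : Fin d, v z k * pd i (pd k F) z = ∑ k : Fin d, v z k * pd k (pd i F) z :=
    Finset.sum_congr rfl fun k _ => by rw [e4 k]
  rw [e3, e5]
  have : mdt v (pd i F) z
      = dd (1,0) (pd i F) z + ∑ k : Fin d, v z k * pd k (pd i F) z := rfl
  rw [this]
  have e6 : ∑ k : Fin d, pd k F z * pd i (fun w => v w k) z
      = ∑ k : Fin d, pd i (fun w => v w k) z * pd k F z :=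
    Finset.sum_congr rfl fun k _ => mul_comm _ _
  rw [e6]
  ring

end S11

namespace S11

variable {d : ℕ}

lemma s3a (F : Fin d → Fin d → Fin d → ℝ) :
    ∑ i : Fin d, ∑ j : Fin d, ∑ k : Fin d, F i j k
      = ∑ i : Fin d, ∑ j : Fin d, ∑ k : Fin d, F j i k := Finset.sum_comm

lemma s3b (F : Fin d → Fin d → Fin d → ℝ) :
    ∑ i : Fin d, ∑ j : Fin d, ∑ k : Fin d, F i j k
      = ∑ i : Fin d, ∑ j : Fin d, ∑ k : Fin d, F i k j :=
  Finset.sum_congr rfl fun _ _ => Finset.sum_comm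

lemma s3rot (F : Fin d → Fin d → Fin d → ℝ) :
    ∑ i : Fin d, ∑ j : Fin d, ∑ k : Fin d, F i j k
      = ∑ i : Fin d, ∑ j : Fin d, ∑ k : Fin d, F k i j :=
  (s3a F).trans (s3b fun a b c => F b a c)

lemma s3rot' (F : Fin d → Fin d → Fin d → ℝ) :
    ∑ i : Fin d, ∑ j : Fin d, ∑ k : Fin d, F i j k
      = ∑ i : Fin d, ∑ j : Fin d, ∑ k : Fin d, F j k i :=
  (s3b F).trans (s3a fun a b c => F a c b)

lemma tcongr (F G : Fin d → Fin d → Fin d → ℝ) (h : ∀ a b c, F a b c = G a b c) :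
    ∑ i : Fin d, ∑ j : Fin d, ∑ k : Fin d, F i j k
      = ∑ i : Fin d, ∑ j : Fin d, ∑ k : Fin d, G i j k :=
  Finset.sum_congr rfl fun i _ => Finset.sum_congr rfl fun j _ =>
    Finset.sum_congr rfl fun k _ => h i j k

lemma qcongr (F G : Fin d → Fin d → Fin d → Fin d → ℝ)
    (h : ∀ a b c e, F a b c e = G a b c e) :
    ∑ i : Fin d, ∑ j : Fin d, ∑ k : Fin d, ∑ l : Fin d, F i j k l
      = ∑ i : Fin d, ∑ j : Fin d, ∑ k : Fin d, ∑ l : Fin d, G i j k l :=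
  Finset.sum_congr rfl fun i _ => Finset.sum_congr rfl fun j _ =>
    Finset.sum_congr rfl fun k _ => Finset.sum_congr rfl fun l _ => h i j k l

lemma perm3_23 (F G : Fin d → Fin d → Fin d → ℝ) (h : ∀ a b c, F a b c = G a c b) :
    ∑ i : Fin d, ∑ j : Fin d, ∑ k : Fin d, F i j k
      = ∑ i : Fin d, ∑ j : Fin d, ∑ k : Fin d, G i j k :=
  (s3b F).trans (tcongr _ _ fun i j k => h i k j)

lemma perm3_rot (F G : Fin d → Fin d → Fin d → ℝ) (h : ∀ a b c, F a b c = G c a b) :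
    ∑ i : Fin d, ∑ j : Fin d, ∑ k : Fin d, F i j k
      = ∑ i : Fin d, ∑ j : Fin d, ∑ k : Fin d, G i j k :=
  (s3rot' F).trans (tcongr _ _ fun i j k => h j k i)

lemma perm3_rot' (F G : Fin d → Fin d → Fin d → ℝ) (h : ∀ a b c, F a b c = G b c a) :
    ∑ i : Fin d, ∑ j : Fin d, ∑ k : Fin d, F i j k
      = ∑ i : Fin d, ∑ j : Fin d, ∑ k : Fin d, G i j k :=
  (s3rot F).trans (tcongr _ _ fun i j k => h k i j)

lemma perm3_13 (F G : Fin d → Fin d → Fin d → ℝ) (h : ∀ a b c, F a b c = G c b a) :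
    ∑ i : Fin d, ∑ j : Fin d, ∑ k : Fin d, F i j k
      = ∑ i : Fin d, ∑ j : Fin d, ∑ k : Fin d, G i j k :=
  (perm3_rot F (fun x y z => G x z y) fun a b c => h a b c).trans
    (perm3_23 _ _ fun _ _ _ => rfl)

lemma s4a (F : Fin d → Fin d → Fin d → Fin d → ℝ) :
    ∑ i : Fin d, ∑ j : Fin d, ∑ k : Fin d, ∑ l : Fin d, F i j k l
      = ∑ i : Fin d, ∑ j : Fin d, ∑ k : Fin d, ∑ l : Fin d, F j i k l := Finset.sum_comm

lemma s4b (F : Fin d → Fin d → Fin d → Fin d → ℝ) :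
    ∑ i : Fin d, ∑ j : Fin d, ∑ k : Fin d, ∑ l : Fin d, F i j k l
      = ∑ i : Fin d, ∑ j : Fin d, ∑ k : Fin d, ∑ l : Fin d, F i k j l :=
  Finset.sum_congr rfl fun _ _ => Finset.sum_comm

lemma s4c (F : Fin d → Fin d → Fin d → Fin d → ℝ) :
    ∑ i : Fin d, ∑ j : Fin d, ∑ k : Fin d, ∑ l : Fin d, F i j k l
      = ∑ i : Fin d, ∑ j : Fin d, ∑ k : Fin d, ∑ l : Fin d, F i j l k :=
  Finset.sum_congr rfl fun _ _ => Finset.sum_congr rfl fun _ _ => Finset.sum_comm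

lemma s4p (F : Fin d → Fin d → Fin d → Fin d → ℝ) :
    ∑ i : Fin d, ∑ j : Fin d, ∑ k : Fin d, ∑ l : Fin d, F i j k l
      = ∑ i : Fin d, ∑ j : Fin d, ∑ k : Fin d, ∑ l : Fin d, F l j i k := by
  rw [s4a F, s4b fun a b c e => F b a c e, s4a fun a b c e => F c a b e,
    s4c fun a b c e => F c b a e]

lemma perm4_34 (F G : Fin d → Fin d → Fin d → Fin d → ℝ)
    (h : ∀ a b c e, F a b c e = G a b e c) :
    ∑ i : Fin d, ∑ j : Fin d, ∑ k : Fin d, ∑ l : Fin d, F i j k l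
      = ∑ i : Fin d, ∑ j : Fin d, ∑ k : Fin d, ∑ l : Fin d, G i j k l :=
  (s4c F).trans (qcongr _ _ fun i j k l => h i j l k)

lemma perm4_p2 (F G : Fin d → Fin d → Fin d → Fin d → ℝ)
    (h : ∀ a b c e, F a b c e = G e b a c) :
    ∑ i : Fin d, ∑ j : Fin d, ∑ k : Fin d, ∑ l : Fin d, F i j k l
      = ∑ i : Fin d, ∑ j : Fin d, ∑ k : Fin d, ∑ l : Fin d, G i j k l :=
  ((s4p F).trans (s4p fun a b c e => F e b a c)).trans
    (qcongr _ _ fun i j k l => h k j l i)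

lemma keyalg (B P : Fin d → Fin d → ℝ) (Q : Fin d → ℝ)
    (C : Fin d → Fin d → Fin d → ℝ) (L : ℝ)
    (hC : ∀ a b c, C a b c = C b a c)
    (hdiv : ∀ i : Fin d, ∑ j : Fin d, C j i j = 0)
    (hL : ∑ k : Fin d, P k k = L)
    (hpois : L = -∑ i : Fin d, ∑ j : Fin d, B i j * B j i) :
    2 * (∑ i : Fin d, ∑ j : Fin d, ∑ k : Fin d,
        ((B j k * B k i) * (-(P i j) - ∑ l : Fin d, B i l * B l j)
         + B i j * (B j k * (-(P k i) - ∑ l : Fin d, B k l * B l i)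
                    + B k i * (-(P j k) - ∑ l : Fin d, B j l * B l k))))
    = -6 * (∑ j : Fin d, ∑ i : Fin d, ∑ k : Fin d,
        ((Q k * B k i) * C j i j + B i j * (Q k * C j k i + B k i * P j k)))
      + 3 * (∑ k : Fin d, (Q k * (∑ i : Fin d, ∑ j : Fin d,
            (B j i * C k i j + B i j * C k j i))
          + (∑ i : Fin d, ∑ j : Fin d, B j i * B i j) * P k k))
      + 3 * L ^ 2
      - 6 * ∑ i : Fin d, ∑ j : Fin d, ∑ k : Fin d, ∑ l : Fin d,
          B j l * B l k * B k i * B i j := by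
  have hEP2 : (2:ℝ) * (∑ i : Fin d, ∑ j : Fin d, ∑ k : Fin d, B j k * B k i * P i j)
      = ∑ i : Fin d, ∑ j : Fin d, ∑ k : Fin d, 2 * (B j k * B k i * P i j) := by
    simp only [Finset.mul_sum]
  have hEP6 : (6:ℝ) * (∑ i : Fin d, ∑ j : Fin d, ∑ k : Fin d, B j k * B k i * P i j)
      = ∑ i : Fin d, ∑ j : Fin d, ∑ k : Fin d, 6 * (B j k * B k i * P i j) := by
    simp only [Finset.mul_sum]
  have hE42 : (2:ℝ) * (∑ i : Fin d, ∑ j : Fin d, ∑ k : Fin d, ∑ l : Fin d,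
        B j l * B l k * B k i * B i j)
      = ∑ i : Fin d, ∑ j : Fin d, ∑ k : Fin d, ∑ l : Fin d,
        2 * (B j l * B l k * B k i * B i j) := by
    simp only [Finset.mul_sum]
  have hE46 : (6:ℝ) * (∑ i : Fin d, ∑ j : Fin d, ∑ k : Fin d, ∑ l : Fin d,
        B j l * B l k * B k i * B i j)
      = ∑ i : Fin d, ∑ j : Fin d, ∑ k : Fin d, ∑ l : Fin d,
        6 * (B j l * B l k * B k i * B i j) := by
    simp only [Finset.mul_sum]
  have hEQ3 : (3:ℝ) * (∑ i : Fin d, ∑ j : Fin d, ∑ k : Fin d, Q i * (B j k * C i k j))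
      = ∑ i : Fin d, ∑ j : Fin d, ∑ k : Fin d, 3 * (Q i * (B j k * C i k j)) := by
    simp only [Finset.mul_sum]
  have hEQ6 : (6:ℝ) * (∑ i : Fin d, ∑ j : Fin d, ∑ k : Fin d, Q i * (B j k * C i k j))
      = ∑ i : Fin d, ∑ j : Fin d, ∑ k : Fin d, 6 * (Q i * (B j k * C i k j)) := by
    simp only [Finset.mul_sum]
  -- G1
  have hG1 : (∑ i : Fin d, ∑ j : Fin d, ∑ k : Fin d, 2 * (B j k * B k i * P i j))
      = 2 * (∑ i : Fin d, ∑ j : Fin d, ∑ k : Fin d, B j k * B k i * P i j) := hEP2.symm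
  -- G2 : F a b c e = G e b a c
  have hG2 : (∑ i : Fin d, ∑ j : Fin d, ∑ k : Fin d, ∑ l : Fin d,
        2 * (B j k * B k i * (B i l * B l j)))
      = 2 * (∑ i : Fin d, ∑ j : Fin d, ∑ k : Fin d, ∑ l : Fin d,
        B j l * B l k * B k i * B i j) := by
    rw [hE42]
    exact perm4_p2 _ _ fun a b c e => by ring
  -- G3 : F a b c = G c a b
  have hG3 : (∑ i : Fin d, ∑ j : Fin d, ∑ k : Fin d, 2 * (B i j * (B j k * P k i)))
      = 2 * (∑ i : Fin d, ∑ j : Fin d, ∑ k : Fin d, B j k * B k i * P i j) := by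
    rw [hEP2]
    exact perm3_rot _ _ fun a b c => by ring
  -- G4 : F a b c e = G a b e c
  have hG4 : (∑ i : Fin d, ∑ j : Fin d, ∑ k : Fin d, ∑ l : Fin d,
        2 * (B i j * (B j k * (B k l * B l i))))
      = 2 * (∑ i : Fin d, ∑ j : Fin d, ∑ k : Fin d, ∑ l : Fin d,
        B j l * B l k * B k i * B i j) := by
    rw [hE42]
    exact perm4_34 _ _ fun a b c e => by ring
  -- G5 : F a b c = G b c a
  have hG5 : (∑ i : Fin d, ∑ j : Fin d, ∑ k : Fin d, 2 * (B i j * (B k i * P j k)))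
      = 2 * (∑ i : Fin d, ∑ j : Fin d, ∑ k : Fin d, B j k * B k i * P i j) := by
    rw [hEP2]
    exact perm3_rot' _ _ fun a b c => by ring
  -- G6 : identity
  have hG6 : (∑ i : Fin d, ∑ j : Fin d, ∑ k : Fin d, ∑ l : Fin d,
        2 * (B i j * (B k i * (B j l * B l k))))
      = 2 * (∑ i : Fin d, ∑ j : Fin d, ∑ k : Fin d, ∑ l : Fin d,
        B j l * B l k * B k i * B i j) := by
    rw [hE42]
    exact qcongr _ _ fun a b c e => by ring
  -- G7 : zero
  have hG7 : (∑ i : Fin d, ∑ j : Fin d, ∑ k : Fin d, 6 * (Q k * B k j * C i j i)) = 0 := by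
    have h2 : (∑ i : Fin d, ∑ j : Fin d, ∑ k : Fin d, 6 * (Q k * B k j * C i j i))
        = ∑ i : Fin d, ∑ j : Fin d, ∑ k : Fin d, 6 * (Q j * B j i) * C k i k :=
      perm3_rot' _ _ fun a b c => by ring
    rw [h2]
    have h1 : ∀ a b : Fin d, (∑ c : Fin d, 6 * (Q b * B b a) * C c a c) = 0 := fun a b => by
      rw [← Finset.mul_sum, hdiv a, mul_zero]
    rw [Finset.sum_congr rfl fun i (_ : i ∈ Finset.univ) =>
      Finset.sum_congr rfl fun j (_ : j ∈ Finset.univ) => h1 i j]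
    simp
  -- G8 : F a b c = G c b a with hC
  have hG8 : (∑ i : Fin d, ∑ j : Fin d, ∑ k : Fin d, 6 * (B j i * (Q k * C i k j)))
      = 6 * (∑ i : Fin d, ∑ j : Fin d, ∑ k : Fin d, Q i * (B j k * C i k j)) := by
    rw [hEQ6]
    exact perm3_13 _ _ fun a b c => by rw [hC a c b]; ring
  -- G9 : F a b c = G a c b
  have hG9 : (∑ i : Fin d, ∑ j : Fin d, ∑ k : Fin d, 6 * (B j i * (B k j * P i k)))
      = 6 * (∑ i : Fin d, ∑ j : Fin d, ∑ k : Fin d, B j k * B k i * P i j) := by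
    rw [hEP6]
    exact perm3_23 _ _ fun a b c => by ring
  -- G10 : F a b c = G a c b
  have hG10 : (∑ i : Fin d, ∑ j : Fin d, ∑ k : Fin d, 3 * (Q i * (B k j * C i j k)))
      = 3 * (∑ i : Fin d, ∑ j : Fin d, ∑ k : Fin d, Q i * (B j k * C i k j)) := by
    rw [hEQ3]
    exact perm3_23 _ _ fun a b c => by ring
  -- G11 : identity
  have hG11 : (∑ i : Fin d, ∑ j : Fin d, ∑ k : Fin d, 3 * (Q i * (B j k * C i k j)))
      = 3 * (∑ i : Fin d, ∑ j : Fin d, ∑ k : Fin d, Q i * (B j k * C i k j)) := hEQ3.symm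
  -- G12 : = 3 * S * L
  have hG12 : (∑ i : Fin d, ∑ j : Fin d, ∑ k : Fin d, 3 * (B k j * B j k * P i i))
      = 3 * (∑ i : Fin d, ∑ j : Fin d, B i j * B j i) * L := by
    have h1 : ∀ a : Fin d, (∑ b : Fin d, ∑ c : Fin d, 3 * (B c b * B b c * P a a))
        = 3 * (∑ i : Fin d, ∑ j : Fin d, B i j * B j i) * P a a := fun a => by
      rw [show (3:ℝ) * (∑ i : Fin d, ∑ j : Fin d, B i j * B j i) * P a a
          = ∑ i : Fin d, ∑ j : Fin d, 3 * (B i j * B j i) * P a a from by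
        simp only [Finset.sum_mul, Finset.mul_sum]]
      exact Finset.sum_congr rfl fun b _ => Finset.sum_congr rfl fun c _ => by ring
    rw [Finset.sum_congr rfl fun i (_ : i ∈ Finset.univ) => h1 i]
    rw [← Finset.mul_sum, hL]
  have hG14 : (∑ i : Fin d, ∑ j : Fin d, ∑ k : Fin d, ∑ l : Fin d,
        6 * (B j l * B l k * B k i * B i j))
      = 6 * (∑ i : Fin d, ∑ j : Fin d, ∑ k : Fin d, ∑ l : Fin d,
        B j l * B l k * B k i * B i j) := hE46.symm
  simp only [mul_sub, sub_mul, mul_neg, neg_mul, mul_add, add_mul, Finset.mul_sum,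
    Finset.sum_mul, Finset.sum_add_distrib, Finset.sum_sub_distrib, Finset.sum_neg_distrib]
  rw [hG14, hG1, hG2, hG3, hG4, hG5, hG6, hG7, hG8, hG9, hG10, hG11, hG12]
  linear_combination (-3 * L) * hpois

end S11

namespace S11
open Filter Topology ContDiff

variable {d : ℕ} {U : Set (Spc d)} {z : Spc d}
  {v : Spc d → Fin d → ℝ} {p : Spc d → ℝ} {g : ℝ}

/-- differentiated Euler equation -/
lemma euler_mdtA (hU : IsOpen U) (hv : ContDiffOn ℝ (⊤ : ℕ∞) v U)
    (hp : ContDiffOn ℝ (⊤ : ℕ∞) p U) (he : IsEulerOn g U v p) (hz : z ∈ U) (i j : Fin d) :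
    mdt v (pd i (fun w => v w j)) z
      = -(pd i (pd j p) z)
        - ∑ k : Fin d, pd i (fun w => v w k) z * pd k (fun w => v w j) z := by
  have hvj : ∀ a : Fin d, ContDiffOn ℝ (⊤ : ℕ∞) (fun w => v w a) U :=
    fun a => contDiffOn_pi.1 hv a
  have hcomm := pd_mdt hU hz hv (hvj j) i
  have heq : pd i (mdt v (fun w => v w j)) z = -(pd i (pd j p) z) := by
    have h1 : pd i (mdt v (fun w => v w j)) z
        = pd i (fun w => -pd j p w - (if (j : ℕ) = d - 1 then g else 0)) z :=
      pd_congrOn hU hz (fun y hy => he.1 y hy j) i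
    have hddp : DifferentiableAt ℝ (fun w => -pd j p w) z :=
      (diffAt hU (pd_smoothOn hU hp j) hz).neg
    calc pd i (mdt v (fun w => v w j)) z
        = pd i (fun w => -pd j p w - (if (j : ℕ) = d - 1 then g else 0)) z := h1
      _ = pd i (fun w => -pd j p w) z
            - pd i (fun _ => (if (j : ℕ) = d - 1 then g else 0)) z :=
          pd_sub hddp (differentiableAt_const _) i
      _ = -(pd i (pd j p) z) := by rw [pd_neg, pd_const]; ring
  rw [heq] at hcomm
  linarith [hcomm]

/-- pressure Poisson equation -/
lemma euler_poisson (hU : IsOpen U) (hv : ContDiffOn ℝ (⊤ : ℕ∞) v U)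
    (hp : ContDiffOn ℝ (⊤ : ℕ∞) p U) (he : IsEulerOn g U v p) (hz : z ∈ U) :
    lap p z = -∑ i : Fin d, ∑ j : Fin d,
        pd i (fun w => v w j) z * pd j (fun w => v w i) z := by
  have hvj : ∀ a : Fin d, ContDiffOn ℝ (⊤ : ℕ∞) (fun w => v w a) U :=
    fun a => contDiffOn_pi.1 hv a
  have h2 : ∀ j : Fin d, pd j (mdt v (fun w => v w j)) z = -(pd j (pd j p) z) := by
    intro j
    have h1 : pd j (mdt v (fun w => v w j)) z
        = pd j (fun w => -pd j p w - (if (j : ℕ) = d - 1 then g else 0)) z :=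
      pd_congrOn hU hz (fun y hy => he.1 y hy j) j
    have hddp : DifferentiableAt ℝ (fun w => -pd j p w) z :=
      (diffAt hU (pd_smoothOn hU hp j) hz).neg
    calc pd j (mdt v (fun w => v w j)) z
        = pd j (fun w => -pd j p w - (if (j : ℕ) = d - 1 then g else 0)) z := h1
      _ = pd j (fun w => -pd j p w) z
            - pd j (fun _ => (if (j : ℕ) = d - 1 then g else 0)) z :=
          pd_sub hddp (differentiableAt_const _) j
      _ = -(pd j (pd j p) z) := by rw [pd_neg, pd_const]; ring
  have hcomm : ∀ j : Fin d, pd j (mdt v (fun w => v w j)) z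
      = mdt v (pd j (fun w => v w j)) z
        + ∑ k : Fin d, pd j (fun w => v w k) z * pd k (fun w => v w j) z :=
    fun j => pd_mdt hU hz hv (hvj j) j
  have hsum0 : ∑ j : Fin d, mdt v (pd j (fun w => v w j)) z = 0 := by
    have hd : ∀ j ∈ Finset.univ, DifferentiableAt ℝ (pd j (fun w => v w j)) z :=
      fun j _ => diffAt hU (pd_smoothOn hU (hvj j) j) hz
    have e1 : mdt v (fun y => ∑ j : Fin d, pd j (fun w => v w j) y) z
        = ∑ j : Fin d, mdt v (pd j (fun w => v w j)) z :=
      mdt_sum Finset.univ (fun j => pd j (fun w => v w j)) hd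
    rw [← e1]
    exact mdt_zeroOn hU hz he.2
  have hA : ∑ j : Fin d, pd j (mdt v (fun w => v w j)) z
      = -∑ j : Fin d, pd j (pd j p) z := by
    rw [Finset.sum_congr rfl fun j (_ : j ∈ Finset.univ) => h2 j, Finset.sum_neg_distrib]
  have hB : ∑ j : Fin d, pd j (mdt v (fun w => v w j)) z
      = ∑ j : Fin d, ∑ k : Fin d, pd j (fun w => v w k) z * pd k (fun w => v w j) z := by
    rw [Finset.sum_congr rfl fun j (_ : j ∈ Finset.univ) => hcomm j, Finset.sum_add_distrib,
      hsum0, zero_add]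
  have hlap : lap p z = ∑ j : Fin d, pd j (pd j p) z := rfl
  rw [hlap]
  rw [hA] at hB
  linarith [hB]

/-- derivative of the divergence-free condition -/
lemma euler_divdiff (hU : IsOpen U) (hv : ContDiffOn ℝ (⊤ : ℕ∞) v U)
    (he : IsEulerOn g U v p) (hz : z ∈ U) (i : Fin d) :
    ∑ j : Fin d, pd j (pd i (fun w => v w j)) z = 0 := by
  have hvj : ∀ a : Fin d, ContDiffOn ℝ (⊤ : ℕ∞) (fun w => v w a) U :=
    fun a => contDiffOn_pi.1 hv a
  have e : ∀ j : Fin d, pd j (pd i (fun w => v w j)) z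
      = pd i (pd j (fun w => v w j)) z :=
    fun j => pd_comm ((hvj j).contDiffAt (hU.mem_nhds hz)) j i
  rw [Finset.sum_congr rfl fun j (_ : j ∈ Finset.univ) => e j]
  have hd : ∀ j ∈ Finset.univ, DifferentiableAt ℝ (pd j (fun w => v w j)) z :=
    fun j _ => diffAt hU (pd_smoothOn hU (hvj j) j) hz
  have e2 : pd i (fun y => ∑ j : Fin d, pd j (fun w => v w j) y) z
      = ∑ j : Fin d, pd i (pd j (fun w => v w j)) z :=
    pd_sum Finset.univ (fun j => pd j (fun w => v w j)) hd i
  rw [← e2, pd_congrOn hU hz (fun y hy => he.2 y hy) i, pd_const]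

end S11

open S11

/-- For any smooth solution of the incompressible Euler equations with gravity
`g ≥ 0` on an open `U ⊆ ℝ_t × ℝᵈ_x`, one has on `U`:
`2 D_t(Σ_{i,j,k} ∂_j v_k ∂_k v_i ∂_i v_j) = −6 Σ_j ∂_j(Σ_{i,k} ∂_k p ∂_k v_i ∂_i v_j)
 + 3 Σ_k ∂_k(∂_k p Σ_{i,j} ∂_j v_i ∂_i v_j) + 3(Δp)² − 6 Σ_{i,j,k,l} ∂_j v_l ∂_l v_k ∂_k v_i ∂_i v_j`. -/
theorem statement11 (d : ℕ) (hd : 1 ≤ d) (g : ℝ) (hg : 0 ≤ g)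
    (U : Set (Spc d)) (hU : IsOpen U)
    (v : Spc d → Fin d → ℝ) (p : Spc d → ℝ)
    (hv : ContDiffOn ℝ (⊤ : ℕ∞) v U) (hp : ContDiffOn ℝ (⊤ : ℕ∞) p U)
    (heuler : IsEulerOn g U v p) :
    ∀ z ∈ U,
      2 * mdt v (fun w => ∑ i : Fin d, ∑ j : Fin d, ∑ k : Fin d,
            pd j (fun w' => v w' k) w * pd k (fun w' => v w' i) w * pd i (fun w' => v w' j) w) z =
        -6 * ∑ j : Fin d, pd j (fun w => ∑ i : Fin d, ∑ k : Fin d,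
              pd k p w * pd k (fun w' => v w' i) w * pd i (fun w' => v w' j) w) z +
          3 * ∑ k : Fin d, pd k (fun w =>
              pd k p w * ∑ i : Fin d, ∑ j : Fin d,
                pd j (fun w' => v w' i) w * pd i (fun w' => v w' j) w) z +
          3 * lap p z ^ 2 -
          6 * ∑ i : Fin d, ∑ j : Fin d, ∑ k : Fin d, ∑ l : Fin d,
            pd j (fun w' => v w' l) z * pd l (fun w' => v w' k) z *
              pd k (fun w' => v w' i) z * pd i (fun w' => v w' j) z := by
  intro z hz
  have hvj : ∀ a : Fin d, ContDiffOn ℝ (⊤ : ℕ∞) (fun w' => v w' a) U :=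
    fun a => contDiffOn_pi.1 hv a
  have dA : ∀ a b : Fin d, DifferentiableAt ℝ (pd a (fun w' => v w' b)) z :=
    fun a b => diffAt hU (pd_smoothOn hU (hvj b) a) hz
  have dP : ∀ a : Fin d, DifferentiableAt ℝ (pd a p) z :=
    fun a => diffAt hU (pd_smoothOn hU hp a) hz
  -- LHS expansion
  have hL1 : mdt v (fun w => ∑ i : Fin d, ∑ j : Fin d, ∑ k : Fin d,
        pd j (fun w' => v w' k) w * pd k (fun w' => v w' i) w * pd i (fun w' => v w' j) w) z
      = ∑ i : Fin d, ∑ j : Fin d, ∑ k : Fin d,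
          mdt v (fun w => pd j (fun w' => v w' k) w * pd k (fun w' => v w' i) w
            * pd i (fun w' => v w' j) w) z := by
    calc mdt v (fun w => ∑ i : Fin d, ∑ j : Fin d, ∑ k : Fin d,
        pd j (fun w' => v w' k) w * pd k (fun w' => v w' i) w * pd i (fun w' => v w' j) w) z
        = ∑ i : Fin d, mdt v (fun w => ∑ j : Fin d, ∑ k : Fin d,
            pd j (fun w' => v w' k) w * pd k (fun w' => v w' i) w
              * pd i (fun w' => v w' j) w) z :=
          mdt_sum _ _ fun i _ => DifferentiableAt.fun_sum fun j _ => DifferentiableAt.fun_sum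
            fun k _ => ((dA j k).mul (dA k i)).mul (dA i j)
      _ = ∑ i : Fin d, ∑ j : Fin d, mdt v (fun w => ∑ k : Fin d,
            pd j (fun w' => v w' k) w * pd k (fun w' => v w' i) w
              * pd i (fun w' => v w' j) w) z :=
          Finset.sum_congr rfl fun i _ => mdt_sum _ _ fun j _ => DifferentiableAt.fun_sum
            fun k _ => ((dA j k).mul (dA k i)).mul (dA i j)
      _ = ∑ i : Fin d, ∑ j : Fin d, ∑ k : Fin d,
            mdt v (fun w => pd j (fun w' => v w' k) w * pd k (fun w' => v w' i) w
              * pd i (fun w' => v w' j) w) z :=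
          Finset.sum_congr rfl fun i _ => Finset.sum_congr rfl fun j _ =>
            mdt_sum _ _ fun k _ => ((dA j k).mul (dA k i)).mul (dA i j)
  have hL2 : ∀ i j k : Fin d,
      mdt v (fun w => pd j (fun w' => v w' k) w * pd k (fun w' => v w' i) w
        * pd i (fun w' => v w' j) w) z
      = (pd j (fun w' => v w' k) z * pd k (fun w' => v w' i) z)
          * (-(pd i (pd j p) z)
            - ∑ l : Fin d, pd i (fun w' => v w' l) z * pd l (fun w' => v w' j) z)
        + pd i (fun w' => v w' j) z
          * (pd j (fun w' => v w' k) z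
              * (-(pd k (pd i p) z)
                - ∑ l : Fin d, pd k (fun w' => v w' l) z * pd l (fun w' => v w' i) z)
            + pd k (fun w' => v w' i) z
              * (-(pd j (pd k p) z)
                - ∑ l : Fin d, pd j (fun w' => v w' l) z * pd l (fun w' => v w' k) z)) := by
    intro i j k
    calc mdt v (fun w => pd j (fun w' => v w' k) w * pd k (fun w' => v w' i) w
        * pd i (fun w' => v w' j) w) z
        = (pd j (fun w' => v w' k) z * pd k (fun w' => v w' i) z)
            * mdt v (pd i (fun w' => v w' j)) z
          + pd i (fun w' => v w' j) z
            * mdt v (fun w => pd j (fun w' => v w' k) w * pd k (fun w' => v w' i) w) z :=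
          mdt_mul ((dA j k).mul (dA k i)) (dA i j)
      _ = (pd j (fun w' => v w' k) z * pd k (fun w' => v w' i) z)
            * mdt v (pd i (fun w' => v w' j)) z
          + pd i (fun w' => v w' j) z
            * (pd j (fun w' => v w' k) z * mdt v (pd k (fun w' => v w' i)) z
              + pd k (fun w' => v w' i) z * mdt v (pd j (fun w' => v w' k)) z) := by
          rw [mdt_mul (dA j k) (dA k i)]
      _ = _ := by
          rw [euler_mdtA hU hv hp heuler hz i j, euler_mdtA hU hv hp heuler hz k i,
            euler_mdtA hU hv hp heuler hz j k]
  -- RHS term 1 expansion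
  have hR1 : ∀ j : Fin d,
      pd j (fun w => ∑ i : Fin d, ∑ k : Fin d,
        pd k p w * pd k (fun w' => v w' i) w * pd i (fun w' => v w' j) w) z
      = ∑ i : Fin d, ∑ k : Fin d,
          ((pd k p z * pd k (fun w' => v w' i) z) * pd j (pd i (fun w' => v w' j)) z
            + pd i (fun w' => v w' j) z
              * (pd k p z * pd j (pd k (fun w' => v w' i)) z
                + pd k (fun w' => v w' i) z * pd j (pd k p) z)) := by
    intro j
    calc pd j (fun w => ∑ i : Fin d, ∑ k : Fin d,
        pd k p w * pd k (fun w' => v w' i) w * pd i (fun w' => v w' j) w) z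
        = ∑ i : Fin d, pd j (fun w => ∑ k : Fin d,
            pd k p w * pd k (fun w' => v w' i) w * pd i (fun w' => v w' j) w) z :=
          pd_sum _ _ (fun i _ => DifferentiableAt.fun_sum
            fun k _ => (((dP k).mul (dA k i)).mul (dA i j))) j
      _ = ∑ i : Fin d, ∑ k : Fin d, pd j (fun w =>
            pd k p w * pd k (fun w' => v w' i) w * pd i (fun w' => v w' j) w) z :=
          Finset.sum_congr rfl fun i _ => pd_sum _ _
            (fun k _ => (((dP k).mul (dA k i)).mul (dA i j))) j
      _ = _ := by
          refine Finset.sum_congr rfl fun i _ => Finset.sum_congr rfl fun k _ => ?_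
          calc pd j (fun w =>
              pd k p w * pd k (fun w' => v w' i) w * pd i (fun w' => v w' j) w) z
              = (pd k p z * pd k (fun w' => v w' i) z) * pd j (pd i (fun w' => v w' j)) z
                + pd i (fun w' => v w' j) z
                  * pd j (fun w => pd k p w * pd k (fun w' => v w' i) w) z :=
                pd_mul ((dP k).mul (dA k i)) (dA i j) j
            _ = _ := by rw [pd_mul (dP k) (dA k i)]
  -- RHS term 2 expansion
  have hR2 : ∀ k : Fin d,
      pd k (fun w => pd k p w * ∑ i : Fin d, ∑ j : Fin d,
        pd j (fun w' => v w' i) w * pd i (fun w' => v w' j) w) z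
      = pd k p z * (∑ i : Fin d, ∑ j : Fin d,
          (pd j (fun w' => v w' i) z * pd k (pd i (fun w' => v w' j)) z
            + pd i (fun w' => v w' j) z * pd k (pd j (fun w' => v w' i)) z))
        + (∑ i : Fin d, ∑ j : Fin d,
            pd j (fun w' => v w' i) z * pd i (fun w' => v w' j) z) * pd k (pd k p) z := by
    intro k
    have hdS : DifferentiableAt ℝ (fun w => ∑ i : Fin d, ∑ j : Fin d,
        pd j (fun w' => v w' i) w * pd i (fun w' => v w' j) w) z :=
      DifferentiableAt.fun_sum fun i _ => DifferentiableAt.fun_sum fun j _ => (dA j i).mul (dA i j)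
    calc pd k (fun w => pd k p w * ∑ i : Fin d, ∑ j : Fin d,
        pd j (fun w' => v w' i) w * pd i (fun w' => v w' j) w) z
        = pd k p z * pd k (fun w => ∑ i : Fin d, ∑ j : Fin d,
            pd j (fun w' => v w' i) w * pd i (fun w' => v w' j) w) z
          + (∑ i : Fin d, ∑ j : Fin d,
              pd j (fun w' => v w' i) z * pd i (fun w' => v w' j) z) * pd k (pd k p) z :=
          pd_mul (dP k) hdS k
      _ = _ := by
          congr 1
          congr 1
          calc pd k (fun w => ∑ i : Fin d, ∑ j : Fin d,
              pd j (fun w' => v w' i) w * pd i (fun w' => v w' j) w) z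
              = ∑ i : Fin d, pd k (fun w => ∑ j : Fin d,
                  pd j (fun w' => v w' i) w * pd i (fun w' => v w' j) w) z :=
                pd_sum _ _ (fun i _ => DifferentiableAt.fun_sum
                  fun j _ => (dA j i).mul (dA i j)) k
            _ = ∑ i : Fin d, ∑ j : Fin d, pd k (fun w =>
                  pd j (fun w' => v w' i) w * pd i (fun w' => v w' j) w) z :=
                Finset.sum_congr rfl fun i _ => pd_sum _ _
                  (fun j _ => (dA j i).mul (dA i j)) k
            _ = _ :=
                Finset.sum_congr rfl fun i _ => Finset.sum_congr rfl fun j _ =>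
                  pd_mul (dA j i) (dA i j) k
  have HL : mdt v (fun w => ∑ i : Fin d, ∑ j : Fin d, ∑ k : Fin d,
        pd j (fun w' => v w' k) w * pd k (fun w' => v w' i) w * pd i (fun w' => v w' j) w) z
      = ∑ i : Fin d, ∑ j : Fin d, ∑ k : Fin d,
        ((pd j (fun w' => v w' k) z * pd k (fun w' => v w' i) z)
          * (-(pd i (pd j p) z)
            - ∑ l : Fin d, pd i (fun w' => v w' l) z * pd l (fun w' => v w' j) z)
        + pd i (fun w' => v w' j) z
          * (pd j (fun w' => v w' k) z
              * (-(pd k (pd i p) z)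
                - ∑ l : Fin d, pd k (fun w' => v w' l) z * pd l (fun w' => v w' i) z)
            + pd k (fun w' => v w' i) z
              * (-(pd j (pd k p) z)
                - ∑ l : Fin d, pd j (fun w' => v w' l) z * pd l (fun w' => v w' k) z))) :=
    hL1.trans (Finset.sum_congr rfl fun i _ => Finset.sum_congr rfl fun j _ =>
      Finset.sum_congr rfl fun k _ => hL2 i j k)
  have HR1 : (∑ j : Fin d, pd j (fun w => ∑ i : Fin d, ∑ k : Fin d,
        pd k p w * pd k (fun w' => v w' i) w * pd i (fun w' => v w' j) w) z)
      = ∑ j : Fin d, ∑ i : Fin d, ∑ k : Fin d,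
          ((pd k p z * pd k (fun w' => v w' i) z) * pd j (pd i (fun w' => v w' j)) z
            + pd i (fun w' => v w' j) z
              * (pd k p z * pd j (pd k (fun w' => v w' i)) z
                + pd k (fun w' => v w' i) z * pd j (pd k p) z)) :=
    Finset.sum_congr rfl fun j _ => hR1 j
  have HR2 : (∑ k : Fin d, pd k (fun w => pd k p w * ∑ i : Fin d, ∑ j : Fin d,
        pd j (fun w' => v w' i) w * pd i (fun w' => v w' j) w) z)
      = ∑ k : Fin d,
          (pd k p z * (∑ i : Fin d, ∑ j : Fin d,
            (pd j (fun w' => v w' i) z * pd k (pd i (fun w' => v w' j)) z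
              + pd i (fun w' => v w' j) z * pd k (pd j (fun w' => v w' i)) z))
          + (∑ i : Fin d, ∑ j : Fin d,
              pd j (fun w' => v w' i) z * pd i (fun w' => v w' j) z) * pd k (pd k p) z) :=
    Finset.sum_congr rfl fun k _ => hR2 k
  rw [HL, HR1, HR2]
  exact keyalg (fun a b => pd a (fun w' => v w' b) z) (fun a b => pd a (pd b p) z)
    (fun a => pd a p z) (fun a b c => pd a (pd b (fun w' => v w' c)) z) (lap p z)
    (fun a b c => pd_comm ((hvj c).contDiffAt (hU.mem_nhds hz)) a b)
    (fun i => euler_divdiff hU hv heuler hz i)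
    rfl
    (euler_poisson hU hv hp heuler hz)
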